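/- Let Y(a), A, V, T be random variables (discrete for simplicity) and U an additional variable such that Y(a) ⊥ A | (V, T, U) and the conditional law of A given (V,T,U) does not depend on U, i.e. f_{Y(a)|A,V,T,U} = f_{Y(a)|V,T,U} and f_{A|V,T,U} = f_{A|V,T} pointwise; then A ⊥ Y(a) | (V,T), without needing Y(a) ⊥ U | (V, T). -/
import Mathlib


-- Probability of an event on a finite probability space with weights `p`.
open Classical in
noncomputable def pr {Ω : Type*} [Fintype Ω] (p : Ω → ℝ) (E : Ω → Prop) : ℝ :=
  ∑ ω, if E ω then p ω else 0

open Classical in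
lemma pr_nonneg' {Ω : Type*} [Fintype Ω] (p : Ω → ℝ) (hp : ∀ ω, 0 ≤ p ω) (E : Ω → Prop) :
    0 ≤ pr p E := by
  apply Finset.sum_nonneg
  intro ω _
  split <;> simp [hp ω]

open Classical in
lemma pr_mono' {Ω : Type*} [Fintype Ω] (p : Ω → ℝ) (hp : ∀ ω, 0 ≤ p ω) {E F : Ω → Prop}
    (h : ∀ ω, E ω → F ω) : pr p E ≤ pr p F := by
  apply Finset.sum_le_sum
  intro ω _
  split
  · rw [if_pos (h ω ‹_›)]
  · split <;> simp [hp ω]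

lemma pr_congr' {Ω : Type*} [Fintype Ω] (p : Ω → ℝ) {E F : Ω → Prop}
    (h : ∀ ω, E ω ↔ F ω) : pr p E = pr p F := by
  unfold pr
  congr 1; funext ω
  by_cases hE : E ω
  · rw [if_pos hE, if_pos ((h ω).1 hE)]
  · rw [if_neg hE, if_neg (fun hF => hE ((h ω).2 hF))]

open Classical in
lemma pr_split' {Ω 𝓤 : Type*} [Fintype Ω] [Fintype 𝓤] (p : Ω → ℝ) (E : Ω → Prop) (U : Ω → 𝓤) :
    pr p E = ∑ u, pr p (fun ω => E ω ∧ U ω = u) := by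
  unfold pr
  rw [Finset.sum_comm]
  congr 1; funext ω
  by_cases h : E ω
  · simp [h]
  · simp [h]

/-- (discrete) if `f_{Y(a)|A,V,T,U} = f_{Y(a)|V,T,U}` and
`f_{A|V,T,U} = f_{A|V,T}`, then `A ⊥ Y(a) | (V,T)`, i.e. the conditional pmf
factorizes: `f_{Y(a),A|V,T} = f_{Y(a)|V,T} · f_{A|V,T}`.
All pmf identities are stated in cross-multiplied form. -/
theorem unconfoundedness_from_control_function
    {Ω 𝓨 𝓐 𝓥 𝓣 𝓤 : Type*} [Fintype Ω] [Fintype 𝓤]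
    (p : Ω → ℝ) (hp : ∀ ω, 0 < p ω) (hsum : ∑ ω, p ω = 1)
    (Ya : Ω → 𝓨) (A : Ω → 𝓐) (V : Ω → 𝓥) (T : Ω → 𝓣) (U : Ω → 𝓤)
    -- f_{Y(a)|A,V,T,U} = f_{Y(a)|V,T,U}
    (h1 : ∀ (y : 𝓨) (a : 𝓐) (v : 𝓥) (t : 𝓣) (u : 𝓤),
      pr p (fun ω => Ya ω = y ∧ A ω = a ∧ V ω = v ∧ T ω = t ∧ U ω = u)
          * pr p (fun ω => V ω = v ∧ T ω = t ∧ U ω = u)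
        = pr p (fun ω => Ya ω = y ∧ V ω = v ∧ T ω = t ∧ U ω = u)
          * pr p (fun ω => A ω = a ∧ V ω = v ∧ T ω = t ∧ U ω = u))
    -- f_{A|V,T,U} = f_{A|V,T}
    (h2 : ∀ (a : 𝓐) (v : 𝓥) (t : 𝓣) (u : 𝓤),
      pr p (fun ω => A ω = a ∧ V ω = v ∧ T ω = t ∧ U ω = u)
          * pr p (fun ω => V ω = v ∧ T ω = t)
        = pr p (fun ω => A ω = a ∧ V ω = v ∧ T ω = t)
          * pr p (fun ω => V ω = v ∧ T ω = t ∧ U ω = u)) :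
    -- conclusion: A ⊥ Y(a) | (V, T)
    ∀ (y : 𝓨) (a : 𝓐) (v : 𝓥) (t : 𝓣),
      pr p (fun ω => Ya ω = y ∧ A ω = a ∧ V ω = v ∧ T ω = t)
          * pr p (fun ω => V ω = v ∧ T ω = t)
        = pr p (fun ω => Ya ω = y ∧ V ω = v ∧ T ω = t)
          * pr p (fun ω => A ω = a ∧ V ω = v ∧ T ω = t) := by
  intro y a v t
  have hp0 : ∀ ω, 0 ≤ p ω := fun ω => le_of_lt (hp ω)
  have hzero : ∀ {E F : Ω → Prop}, (∀ ω, E ω → F ω) → pr p F = 0 → pr p E = 0 := by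
    intro E F hEF hF
    exact le_antisymm (hF ▸ pr_mono' p hp0 hEF) (pr_nonneg' p hp0 E)
  by_cases hvt : pr p (fun ω => V ω = v ∧ T ω = t) = 0
  · have z : pr p (fun ω => Ya ω = y ∧ V ω = v ∧ T ω = t) = 0 :=
      hzero (fun ω h => h.2) hvt
    rw [hvt, mul_zero, z, zero_mul]
  · -- key identity for each u
    have key : ∀ u : 𝓤,
        pr p (fun ω => Ya ω = y ∧ A ω = a ∧ V ω = v ∧ T ω = t ∧ U ω = u)
          * pr p (fun ω => V ω = v ∧ T ω = t)
        = pr p (fun ω => Ya ω = y ∧ V ω = v ∧ T ω = t ∧ U ω = u)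
          * pr p (fun ω => A ω = a ∧ V ω = v ∧ T ω = t) := by
      intro u
      by_cases hu : pr p (fun ω => V ω = v ∧ T ω = t ∧ U ω = u) = 0
      · have z1 : pr p (fun ω => Ya ω = y ∧ A ω = a ∧ V ω = v ∧ T ω = t ∧ U ω = u) = 0 :=
          hzero (fun ω h => ⟨h.2.2.1, h.2.2.2.1, h.2.2.2.2⟩) hu
        have z2 : pr p (fun ω => Ya ω = y ∧ V ω = v ∧ T ω = t ∧ U ω = u) = 0 :=
          hzero (fun ω h => h.2) hu
        rw [z1, z2, zero_mul, zero_mul]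
      · apply mul_right_cancel₀ hu
        calc pr p (fun ω => Ya ω = y ∧ A ω = a ∧ V ω = v ∧ T ω = t ∧ U ω = u)
              * pr p (fun ω => V ω = v ∧ T ω = t)
              * pr p (fun ω => V ω = v ∧ T ω = t ∧ U ω = u)
            = pr p (fun ω => Ya ω = y ∧ A ω = a ∧ V ω = v ∧ T ω = t ∧ U ω = u)
              * pr p (fun ω => V ω = v ∧ T ω = t ∧ U ω = u)
              * pr p (fun ω => V ω = v ∧ T ω = t) := by ring
          _ = pr p (fun ω => Ya ω = y ∧ V ω = v ∧ T ω = t ∧ U ω = u)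
              * (pr p (fun ω => A ω = a ∧ V ω = v ∧ T ω = t ∧ U ω = u)
              * pr p (fun ω => V ω = v ∧ T ω = t)) := by rw [h1]; ring
          _ = pr p (fun ω => Ya ω = y ∧ V ω = v ∧ T ω = t ∧ U ω = u)
              * (pr p (fun ω => A ω = a ∧ V ω = v ∧ T ω = t)
              * pr p (fun ω => V ω = v ∧ T ω = t ∧ U ω = u)) := by rw [h2]
          _ = pr p (fun ω => Ya ω = y ∧ V ω = v ∧ T ω = t ∧ U ω = u)
              * pr p (fun ω => A ω = a ∧ V ω = v ∧ T ω = t)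
              * pr p (fun ω => V ω = v ∧ T ω = t ∧ U ω = u) := by ring
    rw [pr_split' p (fun ω => Ya ω = y ∧ A ω = a ∧ V ω = v ∧ T ω = t) U,
      pr_split' p (fun ω => Ya ω = y ∧ V ω = v ∧ T ω = t) U,
      Finset.sum_mul, Finset.sum_mul]
    apply Finset.sum_congr rfl
    intro u _
    have e1 : pr p (fun ω => (Ya ω = y ∧ A ω = a ∧ V ω = v ∧ T ω = t) ∧ U ω = u)
        = pr p (fun ω => Ya ω = y ∧ A ω = a ∧ V ω = v ∧ T ω = t ∧ U ω = u) :=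
      pr_congr' p (fun ω => by tauto)
    have e2 : pr p (fun ω => (Ya ω = y ∧ V ω = v ∧ T ω = t) ∧ U ω = u)
        = pr p (fun ω => Ya ω = y ∧ V ω = v ∧ T ω = t ∧ U ω = u) :=
      pr_congr' p (fun ω => by tauto)
    rw [e1, e2, key u]
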